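/- Let ω : 𝕋 → ℝ and R : 𝕋 → [0,∞) be bounded measurable, γ₀ > 0, γ₁ > 0, ε ∈ (0,1], and for k ∈ 𝕋 set Ω_ε(k) = [[−εγ₀R(k) − iω(k), εγ₀R(k)], [εγ₀R(k), −εγ₀R(k) + iω(k)]] and 𝔣 = (1,−1)ᵀ. Let Ψ̂ ∈ L²(𝕋; ℂ²) and let Φ : [0,∞) → L²(𝕋; ℂ²) be a continuously differentiable solution of the linear evolution equation d/dt Φ(t,k) = Ω_ε(k) Φ(t,k) − i γ₁ p₀(t) 𝔣, Φ(0) = Ψ̂, where p₀(t) := (1/(2i)) ∫_𝕋 Φ(t,k) · 𝔣 dk (bilinear dot product). Then p₀ satisfies the closed Volterra equation p₀(t) + γ₁ ∫_0^t J_ε(t−s) p₀(s) ds = p₀⁰(t) for all t ≥ 0, where J_ε(t) := ½ ∫_𝕋 e^{Ω_ε(k)t} 𝔣 · 𝔣 dk and p₀⁰(t) := (1/(2i)) ∫_𝕋 e^{Ω_ε(k)t} Ψ̂(k) · 𝔣 dk. -/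

import Mathlib

open MeasureTheory Set Matrix

noncomputable section

/-- The unit torus `𝕋`, modeled as the interval `(-1/2, 1/2]` with Lebesgue measure
(total mass `1`). -/
def torusK : Set ℝ := Ioc (-(1:ℝ)/2) (1/2)

/-- The matrix `Ω_ε(k) = [[−εγ₀R(k) − iω(k), εγ₀R(k)], [εγ₀R(k), −εγ₀R(k) + iω(k)]]`,
written here with `a = εγ₀R(k)`, `w = ω(k)`. -/
def Omat (a w : ℝ) : Matrix (Fin 2) (Fin 2) ℂ :=
  !![-(a:ℂ) - Complex.I * (w:ℂ), (a:ℂ); (a:ℂ), -(a:ℂ) + Complex.I * (w:ℂ)]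

/-- The vector `𝔣 = (1, −1)ᵀ`. -/
def fvec : Fin 2 → ℂ := ![1, -1]

/-- The damped kernel `J_ε(t) = ½ ∫_𝕋 e^{Ω_ε(k)t} 𝔣 · 𝔣 dk`. -/
def Jeps (ω R : ℝ → ℝ) (γ₀ ε : ℝ) (t : ℝ) : ℂ :=
  (1/2 : ℂ) * ∫ k in torusK,
    dotProduct ((NormedSpace.exp ((t:ℂ) • Omat (ε * γ₀ * R k) (ω k))).mulVec fvec) fvec

/-- `p₀⁰(t) = (1/(2i)) ∫_𝕋 e^{Ω_ε(k)t} Ψ̂(k) · 𝔣 dk`. -/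
def pzz (ω R : ℝ → ℝ) (γ₀ ε : ℝ) (Ψ : ℝ → Fin 2 → ℂ) (t : ℝ) : ℂ :=
  (1 / (2 * Complex.I)) * ∫ k in torusK,
    dotProduct ((NormedSpace.exp ((t:ℂ) • Omat (ε * γ₀ * R k) (ω k))).mulVec (Ψ k)) fvec

set_option maxHeartbeats 2000000

section Aux

attribute [local instance] Matrix.linftyOpSemiNormedRing Matrix.linftyOpNormedRing
  Matrix.linftyOpNormedAlgebra Matrix.linftyOpSeminormedAddCommGroup
  Matrix.linftyOpNormedAddCommGroup Matrix.linftyOpNormedSpace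

/-- `mulVec` as a continuous bilinear map. -/
def mulVecCLM : Matrix (Fin 2) (Fin 2) ℂ →L[ℝ] ((Fin 2 → ℂ) →L[ℝ] (Fin 2 → ℂ)) :=
  LinearMap.toContinuousLinearMap
    { toFun := fun M => LinearMap.toContinuousLinearMap (M.mulVecLin.restrictScalars ℝ)
      map_add' := fun M N => by ext v i; simp [Matrix.add_mulVec]
      map_smul' := fun c M => by ext v i; simp [Matrix.smul_mulVec] }

@[simp] lemma mulVecCLM_apply (M : Matrix (Fin 2) (Fin 2) ℂ) (v : Fin 2 → ℂ) :
    mulVecCLM M v = M.mulVec v := by simp [mulVecCLM]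

/-- `dotProduct · fvec` as a continuous linear map. -/
def dotCLM : (Fin 2 → ℂ) →L[ℝ] ℂ :=
  (ContinuousLinearMap.proj (R := ℝ) (φ := fun _ : Fin 2 => ℂ) 0)
    - ContinuousLinearMap.proj 1

@[simp] lemma dotCLM_apply (v : Fin 2 → ℂ) : dotCLM v = dotProduct v fvec := by
  simp [dotCLM, dotProduct, fvec, Fin.sum_univ_two, sub_eq_add_neg]

lemma continuous_Omat : Continuous (fun y : ℝ × ℝ => Omat y.1 y.2) := by
  apply continuous_matrix
  intro i j
  fin_cases i <;> fin_cases j <;>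
    simp [Omat, Fin.zero_eta, Fin.mk_one] <;> fun_prop

def Hfun : ℝ × ℝ × ℝ → ℂ := fun x =>
  dotProduct ((NormedSpace.exp ((x.1:ℂ) • Omat x.2.1 x.2.2)).mulVec fvec) fvec

lemma Hfun_continuous : Continuous Hfun := by
  have h1 : Continuous fun x : ℝ × ℝ × ℝ => NormedSpace.exp ((x.1:ℂ) • Omat x.2.1 x.2.2) :=
    NormedSpace.exp_continuous.comp
      ((Complex.continuous_ofReal.comp continuous_fst).smul
        (continuous_Omat.comp continuous_snd))
  have h2 : Hfun = fun x => dotCLM ((mulVecCLM.flip fvec)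
      (NormedSpace.exp ((x.1:ℂ) • Omat x.2.1 x.2.2))) := by
    funext x; rw [dotCLM_apply]; rfl
  rw [h2]
  exact dotCLM.continuous.comp ((mulVecCLM.flip fvec).continuous.comp h1)

lemma expOmat_continuous (t : ℝ) :
    Continuous fun y : ℝ × ℝ => NormedSpace.exp ((t:ℂ) • Omat y.1 y.2) :=
  NormedSpace.exp_continuous.comp ((continuous_const (y := (t:ℂ))).smul continuous_Omat)

lemma hasDerivWithinAt_texp (A : Matrix (Fin 2) (Fin 2) ℂ) (t : ℝ) (S : Set ℝ) (s : ℝ) :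
    HasDerivWithinAt (fun u : ℝ => NormedSpace.exp (((t - u : ℝ) : ℂ) • A))
      (-(NormedSpace.exp (((t - s : ℝ) : ℂ) • A) * A)) S s := by
  have h1 : HasDerivAt (fun z : ℂ => NormedSpace.exp (z • A))
      (NormedSpace.exp (((t - s : ℝ) : ℂ) • A) * A) (((t - s : ℝ) : ℂ)) :=
    hasDerivAt_exp_smul_const A _
  have h2 : HasDerivAt (fun u : ℝ => ((t - u : ℝ) : ℂ)) (-1 : ℂ) s := by
    simpa using ((hasDerivAt_id s).const_sub t).ofReal_comp
  have h3 := h1.scomp s h2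
  have h4 : HasDerivAt (fun u : ℝ => NormedSpace.exp (((t - u : ℝ) : ℂ) • A))
      (-(NormedSpace.exp (((t - s : ℝ) : ℂ) • A) * A)) s := by
    simp only [neg_smul, one_smul, Function.comp_def] at h3
    exact h3
  exact h4.hasDerivWithinAt

lemma duhamel (A : Matrix (Fin 2) (Fin 2) ℂ) (φ : ℝ → Fin 2 → ℂ) (q : ℝ → ℂ)
    (hφ : ContinuousOn φ (Ici 0)) (hq : ContinuousOn q (Ici 0))
    (hd : ∀ s ∈ Ici (0:ℝ), HasDerivWithinAt φ (A.mulVec (φ s) - q s • fvec) (Ici 0) s)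
    {t : ℝ} (ht : 0 ≤ t) :
    φ t = (NormedSpace.exp ((t:ℂ) • A)).mulVec (φ 0)
      - ∫ s in (0:ℝ)..t, q s • (NormedSpace.exp (((t - s : ℝ) : ℂ) • A)).mulVec fvec := by
  set E : ℝ → Matrix (Fin 2) (Fin 2) ℂ := fun s => NormedSpace.exp (((t - s : ℝ) : ℂ) • A)
    with hE
  have hEc : Continuous E := by
    apply NormedSpace.exp_continuous.comp
    exact (Complex.continuous_ofReal.comp (continuous_const.sub continuous_id)).smul
      continuous_const
  have hEvc : Continuous fun s => (E s).mulVec fvec := by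
    have := ((mulVecCLM.flip fvec).continuous.comp hEc)
    exact this
  have hgc : ContinuousOn (fun s => (E s).mulVec (φ s)) (Icc 0 t) := by
    have h1 : ContinuousOn (fun s => mulVecCLM (E s)) (Icc 0 t) :=
      (mulVecCLM.continuous.comp hEc).continuousOn
    have := h1.clm_apply (hφ.mono Icc_subset_Ici_self)
    simpa using this
  have hf'c : ContinuousOn (fun s => -(q s • (E s).mulVec fvec)) (Icc 0 t) :=
    ((hq.mono Icc_subset_Ici_self).smul hEvc.continuousOn).neg
  have hg' : ∀ x ∈ Ioo 0 t, HasDerivWithinAt (fun s => (E s).mulVec (φ s))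
      (-(q x • (E x).mulVec fvec)) (Ioi x) x := by
    intro x hx
    have hxI : x ∈ Ici (0:ℝ) := le_of_lt hx.1
    have hsub : Ioi x ⊆ Ici (0:ℝ) := fun y hy => le_of_lt (lt_trans hx.1 hy)
    have hc0 := (ContinuousLinearMap.hasFDerivAt mulVecCLM (x := E x)).comp_hasDerivWithinAt x
      (hasDerivWithinAt_texp A t (Ioi x) x)
    have hc : HasDerivWithinAt (fun s => mulVecCLM (E s)) (mulVecCLM (-(E x * A))) (Ioi x) x :=
      hc0
    have hu : HasDerivWithinAt φ (A.mulVec (φ x) - q x • fvec) (Ioi x) x :=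
      (hd x hxI).mono hsub
    have h2 := hc.clm_apply hu
    have h3 : mulVecCLM (-(E x * A)) (φ x)
        + mulVecCLM (E x) (A.mulVec (φ x) - q x • fvec)
        = -(q x • (E x).mulVec fvec) := by
      simp only [mulVecCLM_apply, Matrix.neg_mulVec, Matrix.mulVec_sub, Matrix.mulVec_smul,
        ← Matrix.mulVec_mulVec]
      abel
    rw [h3] at h2
    simpa using h2
  have hf'i : IntervalIntegrable (fun s => -(q s • (E s).mulVec fvec)) volume 0 t := by
    apply ContinuousOn.intervalIntegrable
    rwa [uIcc_of_le ht]
  have hFTC := intervalIntegral.integral_eq_sub_of_hasDeriv_right_of_le ht hgc hg' hf'i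
  rw [intervalIntegral.integral_neg] at hFTC
  have hEt : E t = 1 := by
    simp [hE, NormedSpace.exp_zero]
  have hE0 : E 0 = NormedSpace.exp ((t:ℂ) • A) := by simp [hE]
  rw [hEt, hE0, Matrix.one_mulVec] at hFTC
  rw [eq_comm, sub_eq_iff_eq_add] at hFTC
  rw [hFTC]
  abel

lemma duhamel_dot (A : Matrix (Fin 2) (Fin 2) ℂ) (φ : ℝ → Fin 2 → ℂ) (q : ℝ → ℂ)
    (hφ : ContinuousOn φ (Ici 0)) (hq : ContinuousOn q (Ici 0))
    (hd : ∀ s ∈ Ici (0:ℝ), HasDerivWithinAt φ (A.mulVec (φ s) - q s • fvec) (Ici 0) s)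
    {t : ℝ} (ht : 0 ≤ t) :
    dotProduct (φ t) fvec
      = dotProduct ((NormedSpace.exp ((t:ℂ) • A)).mulVec (φ 0)) fvec
        - ∫ s in (0:ℝ)..t,
            q s * dotProduct ((NormedSpace.exp (((t - s : ℝ) : ℂ) • A)).mulVec fvec) fvec := by
  have hEvc : Continuous fun s : ℝ => (NormedSpace.exp (((t - s : ℝ) : ℂ) • A)).mulVec fvec := by
    have hEc : Continuous fun s : ℝ => NormedSpace.exp (((t - s : ℝ) : ℂ) • A) := by
      apply NormedSpace.exp_continuous.comp
      exact (Complex.continuous_ofReal.comp (continuous_const.sub continuous_id)).smul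
        continuous_const
    exact ((mulVecCLM.flip fvec).continuous.comp hEc)
  have hint : IntervalIntegrable
      (fun s => q s • (NormedSpace.exp (((t - s : ℝ) : ℂ) • A)).mulVec fvec) volume 0 t := by
    apply ContinuousOn.intervalIntegrable
    rw [uIcc_of_le ht]
    exact (hq.mono Icc_subset_Ici_self).smul hEvc.continuousOn
  have hd0 := duhamel A φ q hφ hq hd ht
  have h1 := congrArg dotCLM hd0
  rw [map_sub, ← dotCLM.intervalIntegral_comp_comm hint] at h1
  simpa [smul_eq_mul, mul_add, add_mul, mul_assoc] using h1

/-- If `Φ` is a continuously differentiable solution of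
`dΦ/dt (t,k) = Ω_ε(k)Φ(t,k) − iγ₁ p₀(t) 𝔣`, `Φ(0) = Ψ̂`, where
`p₀(t) = (1/(2i)) ∫_𝕋 Φ(t,k)·𝔣 dk` is the momentum of the thermostatted particle,
then `p₀` satisfies the closed Volterra equation
`p₀(t) + γ₁ ∫_0^t J_ε(t−s) p₀(s) ds = p₀⁰(t)` for all `t ≥ 0`. -/
theorem momentum_volterra_equation
    (ω R : ℝ → ℝ) (hωm : Measurable ω) (hRm : Measurable R) (hRnn : ∀ k, 0 ≤ R k)
    (hωb : ∃ C : ℝ, ∀ k, |ω k| ≤ C) (hRb : ∃ C : ℝ, ∀ k, R k ≤ C)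
    (γ₀ γ₁ : ℝ) (hγ₀ : 0 < γ₀) (hγ₁ : 0 < γ₁) (ε : ℝ) (hε : ε ∈ Ioc (0:ℝ) 1)
    (Ψ : ℝ → Fin 2 → ℂ) (hΨ : MemLp Ψ 2 (volume.restrict torusK))
    (Φ : ℝ → ℝ → Fin 2 → ℂ) (p₀ : ℝ → ℂ)
    (hp₀ : ∀ t : ℝ, p₀ t = (1 / (2 * Complex.I)) * ∫ k in torusK, dotProduct (Φ t k) fvec)
    (hΦint : ∀ t ∈ Ici (0:ℝ), IntegrableOn (fun k => Φ t k) torusK)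
    (hΦcont : ∀ k, ContinuousOn (fun t => Φ t k) (Ici (0:ℝ)))
    (hp₀cont : ContinuousOn p₀ (Ici (0:ℝ)))
    (hinit : ∀ k, Φ 0 k = Ψ k)
    (hderiv : ∀ k, ∀ t ∈ Ici (0:ℝ),
        HasDerivWithinAt (fun s => Φ s k)
          ((Omat (ε * γ₀ * R k) (ω k)).mulVec (Φ t k)
            - (Complex.I * (γ₁:ℂ) * p₀ t) • fvec) (Ici (0:ℝ)) t) :
    ∀ t : ℝ, 0 ≤ t →
      p₀ t + (γ₁:ℂ) * ∫ s in (0:ℝ)..t, Jeps ω R γ₀ ε (t - s) * p₀ s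
        = pzz ω R γ₀ ε Ψ t := by
  intro t ht
  haveI hfin1 : IsFiniteMeasure (volume.restrict torusK) :=
    ⟨by rw [Measure.restrict_apply_univ]; exact measure_Ioc_lt_top⟩
  haveI hfin2 : IsFiniteMeasure (volume.restrict (Ioc (0:ℝ) t)) :=
    ⟨by rw [Measure.restrict_apply_univ]; exact measure_Ioc_lt_top⟩
  obtain ⟨Cω, hCω⟩ := hωb
  obtain ⟨CR, hCR⟩ := hRb
  have hak : ∀ k, ε * γ₀ * R k ∈ Icc (0:ℝ) (γ₀ * CR) := by
    intro k
    constructor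
    · exact mul_nonneg (mul_nonneg hε.1.le hγ₀.le) (hRnn k)
    · calc ε * γ₀ * R k ≤ 1 * γ₀ * R k :=
            mul_le_mul_of_nonneg_right (mul_le_mul_of_nonneg_right hε.2 hγ₀.le) (hRnn k)
        _ = γ₀ * R k := by ring
        _ ≤ γ₀ * CR := mul_le_mul_of_nonneg_left (hCR k) hγ₀.le
  have hwk : ∀ k, ω k ∈ Icc (-Cω) Cω := fun k =>
    ⟨(abs_le.mp (hCω k)).1, (abs_le.mp (hCω k)).2⟩
  have hHc : Continuous Hfun := Hfun_continuous
  have key : ∀ k, dotProduct (Φ t k) fvec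
      = dotProduct ((NormedSpace.exp ((t:ℂ) • Omat (ε * γ₀ * R k) (ω k))).mulVec (Ψ k)) fvec
        - ∫ s in (0:ℝ)..t,
            (Complex.I * (γ₁:ℂ) * p₀ s) * Hfun (t - s, ε * γ₀ * R k, ω k) := by
    intro k
    have hq : ContinuousOn (fun s => Complex.I * (γ₁:ℂ) * p₀ s) (Ici 0) :=
      continuousOn_const.mul hp₀cont
    have h := duhamel_dot (Omat (ε * γ₀ * R k) (ω k)) (fun s => Φ s k)
      (fun s => Complex.I * (γ₁:ℂ) * p₀ s) (hΦcont k) hq (fun s hs => hderiv k s hs) ht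
    simpa [Hfun, hinit k] using h
  set Fk : ℝ → ℂ := fun k =>
    dotProduct ((NormedSpace.exp ((t:ℂ) • Omat (ε * γ₀ * R k) (ω k))).mulVec (Ψ k)) fvec
    with hFkdef
  set Gk : ℝ → ℂ := fun k =>
    ∫ s in Ioc (0:ℝ) t, (Complex.I * (γ₁:ℂ) * p₀ s) * Hfun (t - s, ε * γ₀ * R k, ω k) with hGkdef
  have key' : ∀ k, dotProduct (Φ t k) fvec = Fk k - Gk k := by
    intro k
    rw [key k, intervalIntegral.integral_of_le ht]
  obtain ⟨Ce, hCe⟩ := (((isCompact_Icc (a := (0:ℝ)) (b := t)).prod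
      ((isCompact_Icc (a := (0:ℝ)) (b := γ₀ * CR)).prod
        (isCompact_Icc (a := -Cω) (b := Cω))))).exists_bound_of_continuousOn hHc.continuousOn
  obtain ⟨Cp, hCp⟩ := (isCompact_Icc (a := (0:ℝ)) (b := t)).exists_bound_of_continuousOn
    (hp₀cont.mono Icc_subset_Ici_self)
  have hM2c := expOmat_continuous t
  have hgc : Continuous fun y : ℝ × ℝ =>
      dotCLM.comp (mulVecCLM (NormedSpace.exp ((t:ℂ) • Omat y.1 y.2))) :=
    (ContinuousLinearMap.compL ℝ (Fin 2 → ℂ) (Fin 2 → ℂ) ℂ dotCLM).continuous.comp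
      (mulVecCLM.continuous.comp (expOmat_continuous t))
  obtain ⟨Cm, hCm⟩ := ((isCompact_Icc (a := (0:ℝ)) (b := γ₀ * CR)).prod
      (isCompact_Icc (a := -Cω) (b := Cω))).exists_bound_of_continuousOn hgc.continuousOn
  have hpair : Measurable fun k => (ε * γ₀ * R k, ω k) :=
    (hRm.const_mul (ε * γ₀)).prodMk hωm
  have hΨm := hΨ.aestronglyMeasurable
  have hFkm : AEStronglyMeasurable Fk (volume.restrict torusK) := by
    have h1 := (ContinuousLinearMap.id ℝ ((Fin 2 → ℂ) →L[ℝ] ℂ)).aestronglyMeasurable_comp₂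
      (hgc.comp_aestronglyMeasurable hpair.aestronglyMeasurable) hΨm
    exact h1.congr (Filter.Eventually.of_forall fun k => by simp [hFkdef])
  have hΨi : Integrable Ψ (volume.restrict torusK) := hΨ.integrable (by norm_num)
  have hFki : Integrable Fk (volume.restrict torusK) := by
    refine Integrable.mono' (hΨi.norm.const_mul Cm) hFkm ?_
    filter_upwards [ae_restrict_mem (measurableSet_Ioc : MeasurableSet torusK)] with k hk
    have h1 : Fk k = (dotCLM.comp (mulVecCLM
        (NormedSpace.exp ((t:ℂ) • Omat (ε * γ₀ * R k) (ω k))))) (Ψ k) := by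
      simp [hFkdef]
    rw [h1]
    calc ‖(dotCLM.comp (mulVecCLM
          (NormedSpace.exp ((t:ℂ) • Omat (ε * γ₀ * R k) (ω k))))) (Ψ k)‖
        ≤ ‖dotCLM.comp (mulVecCLM
            (NormedSpace.exp ((t:ℂ) • Omat (ε * γ₀ * R k) (ω k))))‖ * ‖Ψ k‖ :=
          ContinuousLinearMap.le_opNorm _ _
      _ ≤ Cm * ‖Ψ k‖ := by
          gcongr
          exact hCm (ε * γ₀ * R k, ω k) ⟨hak k, hwk k⟩
  set P : ℝ × ℝ → ℂ := fun z =>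
    (Complex.I * (γ₁:ℂ) * p₀ z.2) * Hfun (t - z.2, ε * γ₀ * R z.1, ω z.1) with hPdef
  have hPm : AEStronglyMeasurable P
      ((volume.restrict torusK).prod (volume.restrict (Ioc (0:ℝ) t))) := by
    have h1 : AEStronglyMeasurable (fun z : ℝ × ℝ => Hfun (t - z.2, ε * γ₀ * R z.1, ω z.1))
        ((volume.restrict torusK).prod (volume.restrict (Ioc (0:ℝ) t))) :=
      hHc.comp_aestronglyMeasurable
        (((measurable_const.sub measurable_snd).prodMk
          (((hRm.const_mul (ε * γ₀)).comp measurable_fst).prodMk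
            (hωm.comp measurable_fst))).aestronglyMeasurable)
    have h2 : AEStronglyMeasurable (fun z : ℝ × ℝ => p₀ z.2)
        ((volume.restrict torusK).prod (volume.restrict (Ioc (0:ℝ) t))) :=
      AEStronglyMeasurable.comp_snd
        ((hp₀cont.mono (fun x hx => le_of_lt hx.1)).aestronglyMeasurable measurableSet_Ioc)
    exact (aestronglyMeasurable_const.mul h2).mul h1
  have hPi : Integrable P ((volume.restrict torusK).prod (volume.restrict (Ioc (0:ℝ) t))) := by
    refine Integrable.mono'
      (integrable_const (‖Complex.I * (γ₁:ℂ)‖ * Cp * Ce)) hPm ?_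
    have hprod : (volume.restrict torusK).prod (volume.restrict (Ioc (0:ℝ) t))
        = ((volume : Measure ℝ).prod volume).restrict (torusK ×ˢ Ioc (0:ℝ) t) :=
      Measure.prod_restrict _ _
    rw [hprod]
    filter_upwards [ae_restrict_mem ((measurableSet_Ioc : MeasurableSet torusK).prod
      measurableSet_Ioc)] with z hz
    obtain ⟨hz1, hz2⟩ := hz
    have hCp0 : 0 ≤ Cp := le_trans (norm_nonneg _) (hCp 0 ⟨le_refl 0, ht⟩)
    have h1 : ‖p₀ z.2‖ ≤ Cp := hCp _ ⟨hz2.1.le, hz2.2⟩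
    have h2 : ‖Hfun (t - z.2, ε * γ₀ * R z.1, ω z.1)‖ ≤ Ce :=
      hCe _ ⟨⟨sub_nonneg.mpr hz2.2, sub_le_self t hz2.1.le⟩, hak z.1, hwk z.1⟩
    calc ‖P z‖ = ‖Complex.I * (γ₁:ℂ)‖ * ‖p₀ z.2‖ * ‖Hfun (t - z.2, ε * γ₀ * R z.1, ω z.1)‖ := by
          simp [hPdef, norm_mul, mul_assoc]
      _ ≤ ‖Complex.I * (γ₁:ℂ)‖ * Cp * ‖Hfun (t - z.2, ε * γ₀ * R z.1, ω z.1)‖ := by gcongr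
      _ ≤ ‖Complex.I * (γ₁:ℂ)‖ * Cp * Ce :=
          mul_le_mul_of_nonneg_left h2 (mul_nonneg (norm_nonneg _) hCp0)
  have hGki : Integrable Gk (volume.restrict torusK) := by
    have h := hPi.integral_prod_left
    exact h.congr (Filter.Eventually.of_forall fun k => by simp [hGkdef, hPdef])
  have hJ : ∀ u : ℝ, ∫ k in torusK, Hfun (u, ε * γ₀ * R k, ω k)
      = 2 * Jeps ω R γ₀ ε u := by
    intro u
    have h0 : Jeps ω R γ₀ ε u = (1/2 : ℂ) * ∫ k in torusK, Hfun (u, ε * γ₀ * R k, ω k) := rfl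
    rw [h0]; ring
  have hGint_eq : ∫ k in torusK, Gk k
      = (2 * Complex.I * (γ₁:ℂ)) * ∫ s in (0:ℝ)..t, Jeps ω R γ₀ ε (t - s) * p₀ s := by
    have hswap := integral_integral_swap
      (f := fun k s => (Complex.I * (γ₁:ℂ) * p₀ s) * Hfun (t - s, ε * γ₀ * R k, ω k)) hPi
    calc ∫ k in torusK, Gk k
        = ∫ s in Ioc (0:ℝ) t, ∫ k in torusK,
            (Complex.I * (γ₁:ℂ) * p₀ s) * Hfun (t - s, ε * γ₀ * R k, ω k) := by
          simp only [hGkdef]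
          exact hswap
      _ = ∫ s in Ioc (0:ℝ) t, (2 * Complex.I * (γ₁:ℂ)) * (Jeps ω R γ₀ ε (t - s) * p₀ s) := by
          refine integral_congr_ae (Filter.Eventually.of_forall fun s => ?_)
          dsimp only
          rw [integral_const_mul, hJ (t - s)]
          ring
      _ = (2 * Complex.I * (γ₁:ℂ)) * ∫ s in Ioc (0:ℝ) t, Jeps ω R γ₀ ε (t - s) * p₀ s :=
          integral_const_mul _ _
      _ = (2 * Complex.I * (γ₁:ℂ)) * ∫ s in (0:ℝ)..t, Jeps ω R γ₀ ε (t - s) * p₀ s := by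
          rw [intervalIntegral.integral_of_le ht]
  have hpzz : pzz ω R γ₀ ε Ψ t = (1 / (2 * Complex.I)) * ∫ k in torusK, Fk k := by
    simp only [hFkdef]
    rfl
  have hmain : p₀ t = pzz ω R γ₀ ε Ψ t
      - (γ₁:ℂ) * ∫ s in (0:ℝ)..t, Jeps ω R γ₀ ε (t - s) * p₀ s := by
    have h1 : p₀ t = (1 / (2 * Complex.I)) * ∫ k in torusK, (Fk k - Gk k) := by
      rw [hp₀ t]
      congr 1
      exact integral_congr_ae (Filter.Eventually.of_forall key')
    rw [h1, integral_sub hFki hGki, hGint_eq, hpzz]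
    have hI : Complex.I ≠ 0 := Complex.I_ne_zero
    field_simp
  rw [hmain]; ring
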